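/- Let χ₁ and χ₂ be orthonormal vectors in ℂ²⊗ℂ² whose rank-one projections have equal partial traces on both subsystems (Tr₁ |χ₁⟩⟨χ₁| = Tr₁ |χ₂⟩⟨χ₂| and Tr₂ |χ₁⟩⟨χ₁| = Tr₂ |χ₂⟩⟨χ₂|). Then the equal mixture ρ(1/2) = (1/2)|χ₁⟩⟨χ₁| + (1/2)|χ₂⟩⟨χ₂| IS separable. Combined with the entanglement of ρ(p) for p ≠ 1/2, this shows that entanglement in the masked states is necessary and sufficient for masking two arbitrary single-qubit commuting mixed states: the masked mixture is separable exactly when the input state is the equal mixture. -/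

import Mathlib

open Matrix Kronecker Polynomial ComplexOrder

noncomputable section

/-- Partial trace over the first subsystem of a two-qubit (4×4) matrix. -/
def ptr1 (M : Matrix (Fin 2 × Fin 2) (Fin 2 × Fin 2) ℂ) : Matrix (Fin 2) (Fin 2) ℂ :=
  Matrix.of fun j l => ∑ i, M (i, j) (i, l)

/-- Partial trace over the second subsystem of a two-qubit (4×4) matrix. -/
def ptr2 (M : Matrix (Fin 2 × Fin 2) (Fin 2 × Fin 2) ℂ) : Matrix (Fin 2) (Fin 2) ℂ :=
  Matrix.of fun i k => ∑ j, M (i, j) (k, j)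

/-- Rank-one projection |v⟩⟨v| of a qubit vector. -/
def proj2 (v : Fin 2 → ℂ) : Matrix (Fin 2) (Fin 2) ℂ :=
  Matrix.of fun i j => v i * star (v j)

/-- Rank-one projection |v⟩⟨v| of a two-qubit vector. -/
def proj4 (v : Fin 2 × Fin 2 → ℂ) : Matrix (Fin 2 × Fin 2) (Fin 2 × Fin 2) ℂ :=
  Matrix.of fun p q => v p * star (v q)

/-- Kronecker (tensor) product of two qubit vectors. -/
def tens (a b : Fin 2 → ℂ) : Fin 2 × Fin 2 → ℂ := fun p => a p.1 * b p.2

/-- Unit (normalized) vector. -/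
def UnitVec {α : Type*} [Fintype α] (v : α → ℂ) : Prop := ∑ i, v i * star (v i) = 1

/-- Hermitian inner product of two-qubit vectors. -/
def inner4 (v w : Fin 2 × Fin 2 → ℂ) : ℂ := ∑ p, star (v p) * w p

/-- A 2×2 density matrix: positive semidefinite with unit trace. -/
def IsDensity2 (A : Matrix (Fin 2) (Fin 2) ℂ) : Prop := A.PosSemidef ∧ A.trace = 1

/-- Separability of a two-qubit density matrix: a finite convex combination of
Kronecker products of 2×2 density matrices. -/
def Separable4 (ρ : Matrix (Fin 2 × Fin 2) (Fin 2 × Fin 2) ℂ) : Prop :=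
  ∃ (n : ℕ) (w : Fin n → ℝ) (A B : Fin n → Matrix (Fin 2) (Fin 2) ℂ),
    (∀ i, 0 ≤ w i) ∧ (∑ i, w i = 1) ∧
    (∀ i, IsDensity2 (A i)) ∧ (∀ i, IsDensity2 (B i)) ∧
    ρ = ∑ i, (w i : ℂ) • (A i ⊗ₖ B i)

/-- Standard basis vector e₀ of ℂ². -/
def e₀ : Fin 2 → ℂ := ![1, 0]

/-- Standard basis vector e₁ of ℂ². -/
def e₁ : Fin 2 → ℂ := ![0, 1]

/-- The masked mixture ρ(p) = p|χ₁⟩⟨χ₁| + (1−p)|χ₂⟩⟨χ₂|. -/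
def mix (χ₁ χ₂ : Fin 2 × Fin 2 → ℂ) (p : ℝ) : Matrix (Fin 2 × Fin 2) (Fin 2 × Fin 2) ℂ :=
  (p : ℂ) • proj4 χ₁ + (1 - (p : ℂ)) • proj4 χ₂

/-!
Write a two-qubit vector χ through its 2×2 coefficient matrix M, so that Tr₂|χ⟩⟨χ| = M Mᴴ,
Tr₁|χ⟩⟨χ| = (Mᴴ M)ᵀ and ⟨χ₁, χ₂⟩ = tr (M₁ᴴ M₂). Equal marginals make C = M₁ᴴ M₂ a traceless
normal matrix with Cᴴ C = (M₁ᴴ M₁)²; for a traceless normal 2×2 matrix Cᴴ C is scalar, and a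
trace-one 2×2 matrix with scalar square is 1/2. So M₁ᴴ M₁ = M₂ᴴ M₂ = 1/2, both states are
maximally entangled, and det (M₁ + w M₂) = det M₁ + w² det M₂ with |det M₁| = |det M₂|. For a
unimodular z with z² = -det M₁ / det M₂ the vectors χ₁ ± z χ₂ are therefore product vectors, and
ρ(1/2) = ¼ |χ₁ + zχ₂⟩⟨χ₁ + zχ₂| + ¼ |χ₁ - zχ₂⟩⟨χ₁ - zχ₂|.
-/

section FinTwo

variable {R K : Type*} [CommRing R] [Field K]

theorem Matrix.det_add_fin_two (A B : Matrix (Fin 2) (Fin 2) R) :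
    (A + B).det = A.det + (A.adjugate * B).trace + B.det := by
  simp only [det_fin_two, adjugate_fin_two, trace_fin_two, mul_apply, Fin.sum_univ_two,
    add_apply, of_apply, cons_val', cons_val_zero, cons_val_one, empty_val', cons_val_fin_one]
  ring

theorem Matrix.adjugate_eq_det_smul_of_mul_eq_one {n : Type*} [Fintype n] [DecidableEq n]
    {A B : Matrix n n R} (h : B * A = 1) : A.adjugate = A.det • B :=
  calc A.adjugate = A.adjugate * (A * B) := by rw [mul_eq_one_comm.mp h, Matrix.mul_one]
    _ = A.det • B := by rw [← Matrix.mul_assoc, adjugate_mul, smul_mul, Matrix.one_mul]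

theorem Matrix.eq_half_smul_one_of_mul_self_eq_smul_one [NeZero (2 : K)]
    {Q : Matrix (Fin 2) (Fin 2) K} {s : K} (hQ : Q * Q = s • 1) (htr : Q.trace = 1) :
    Q = (1 / 2 : K) • 1 := by
  have entry := fun i j => congrFun₂ hQ i j
  simp only [mul_apply, Fin.sum_univ_two, smul_apply, smul_eq_mul] at entry
  rw [trace_fin_two] at htr
  have e00 : Q 0 0 * Q 0 0 + Q 0 1 * Q 1 0 = s := by simpa using entry 0 0
  have e01 : Q 0 0 * Q 0 1 + Q 0 1 * Q 1 1 = 0 := by simpa using entry 0 1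
  have e10 : Q 1 0 * Q 0 0 + Q 1 1 * Q 1 0 = 0 := by simpa using entry 1 0
  have e11 : Q 1 0 * Q 0 1 + Q 1 1 * Q 1 1 = s := by simpa using entry 1 1
  have h01 : Q 0 1 = 0 := by linear_combination e01 - Q 0 1 * htr
  have h10 : Q 1 0 = 0 := by linear_combination e10 - Q 1 0 * htr
  have hdiag : Q 0 0 = Q 1 1 := by linear_combination e00 - e11 + (Q 1 1 - Q 0 0) * htr
  have h00 : Q 0 0 = 1 / 2 := by rw [eq_div_iff two_ne_zero]; linear_combination htr + hdiag
  have h11 : Q 1 1 = 1 / 2 := by rw [eq_div_iff two_ne_zero]; linear_combination htr - hdiag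
  ext i j
  fin_cases i <;> fin_cases j <;> simp [h00, h01, h10, h11]

theorem Matrix.exists_conjTranspose_mul_self_eq_smul_one [NeZero (2 : K)] [StarRing K]
    {C : Matrix (Fin 2) (Fin 2) K} (htr : C.trace = 0) (hC : Cᴴ * C = C * Cᴴ) :
    ∃ s : K, Cᴴ * C = s • 1 := by
  have hd : C 1 1 = -C 0 0 := by rw [trace_fin_two] at htr; linear_combination htr
  have entry := fun i j => congrFun₂ hC i j
  simp only [mul_apply, conjTranspose_apply, Fin.sum_univ_two] at entry
  have n00 := entry 0 0
  have n01 := entry 0 1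
  have n10 := entry 1 0
  simp only [hd, star_neg] at n01 n10
  have o01 : (Cᴴ * C) 0 1 = 0 := by
    simp only [mul_apply, conjTranspose_apply, Fin.sum_univ_two, hd]
    exact mul_left_cancel₀ two_ne_zero (by linear_combination n01)
  have o10 : (Cᴴ * C) 1 0 = 0 := by
    simp only [mul_apply, conjTranspose_apply, Fin.sum_univ_two, hd, star_neg]
    exact mul_left_cancel₀ two_ne_zero (by linear_combination n10)
  have d11 : (Cᴴ * C) 1 1 = (Cᴴ * C) 0 0 := by
    simp only [mul_apply, conjTranspose_apply, Fin.sum_univ_two, hd, star_neg]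
    linear_combination -n00
  refine ⟨(Cᴴ * C) 0 0, ?_⟩
  ext i j
  fin_cases i <;> fin_cases j <;> simp [o01, o10, d11]

theorem Matrix.conjTranspose_mul_self_eq_half_smul_one [NeZero (2 : K)] [StarRing K]
    {M N : Matrix (Fin 2) (Fin 2) K} (hP : M * Mᴴ = N * Nᴴ) (hQ : Mᴴ * M = Nᴴ * N)
    (horth : (Mᴴ * N).trace = 0) (htr : (Mᴴ * M).trace = 1) : Mᴴ * M = (1 / 2 : K) • 1 := by
  have hCC : (Mᴴ * N)ᴴ * (Mᴴ * N) = (Mᴴ * M) * (Mᴴ * M) := by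
    calc (Mᴴ * N)ᴴ * (Mᴴ * N) = Nᴴ * (M * Mᴴ) * N := by
          simp only [conjTranspose_mul, conjTranspose_conjTranspose, Matrix.mul_assoc]
      _ = (Mᴴ * M) * (Mᴴ * M) := by rw [hP, hQ]; simp only [Matrix.mul_assoc]
  have hCC' : (Mᴴ * N) * (Mᴴ * N)ᴴ = (Mᴴ * M) * (Mᴴ * M) := by
    calc (Mᴴ * N) * (Mᴴ * N)ᴴ = Mᴴ * (N * Nᴴ) * M := by
          simp only [conjTranspose_mul, conjTranspose_conjTranspose, Matrix.mul_assoc]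
      _ = (Mᴴ * M) * (Mᴴ * M) := by rw [← hP]; simp only [Matrix.mul_assoc]
  obtain ⟨s, hs⟩ := exists_conjTranspose_mul_self_eq_smul_one horth (hCC.trans hCC'.symm)
  exact eq_half_smul_one_of_mul_self_eq_smul_one (hCC ▸ hs) htr

theorem Matrix.det_add_smul_of_trace_conjTranspose_mul_eq_zero [StarRing K]
    {M N : Matrix (Fin 2) (Fin 2) K} {c : K} (hc : c ≠ 0) (hM : Mᴴ * M = c • 1)
    (horth : (Mᴴ * N).trace = 0) (w : K) : (M + w • N).det = M.det + w ^ 2 * N.det := by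
  -- `adj M = (det M / c) • Mᴴ`, so the cross term `tr (adj M * w • N)` is a multiple of
  -- `tr (Mᴴ * N) = 0`.
  have hadj : M.adjugate = M.det • c⁻¹ • Mᴴ := adjugate_eq_det_smul_of_mul_eq_one <| by
    rw [smul_mul, hM, smul_smul, inv_mul_cancel₀ hc, one_smul]
  rw [det_add_fin_two, hadj, det_smul, Fintype.card_fin, smul_mul, smul_mul, mul_smul_comm,
    trace_smul, trace_smul, trace_smul, horth]
  simp

end FinTwo

theorem Matrix.norm_det_sq_of_conjTranspose_mul_self_eq_smul_one
    {A : Matrix (Fin 2) (Fin 2) ℂ} {c : ℂ} (hA : Aᴴ * A = c • 1) : ‖A.det‖ ^ 2 = ‖c‖ ^ 2 := by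
  have := congrArg (fun B => ‖B.det‖) hA
  simpa [det_mul, det_conjTranspose, norm_mul, norm_pow, sq] using this

theorem Matrix.exists_norm_eq_one_det_add_smul_eq_zero
    {M N : Matrix (Fin 2) (Fin 2) ℂ} {c : ℂ} (hc : c ≠ 0) (hM : Mᴴ * M = c • 1)
    (hN : Nᴴ * N = c • 1) (horth : (Mᴴ * N).trace = 0) :
    ∃ z : ℂ, ‖z‖ = 1 ∧ (M + z • N).det = 0 ∧ (M - z • N).det = 0 := by
  have hdet := fun w => det_add_smul_of_trace_conjTranspose_mul_eq_zero hc hM horth w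
  have hnorm : ‖M.det‖ = ‖N.det‖ := by
    rw [← pow_left_inj₀ (norm_nonneg _) (norm_nonneg _) two_ne_zero,
      norm_det_sq_of_conjTranspose_mul_self_eq_smul_one hM,
      norm_det_sq_of_conjTranspose_mul_self_eq_smul_one hN]
  have hN0 : N.det ≠ 0 := by
    rw [← norm_ne_zero_iff, ← pow_ne_zero_iff two_ne_zero,
      norm_det_sq_of_conjTranspose_mul_self_eq_smul_one hN]
    exact pow_ne_zero 2 (norm_ne_zero_iff.mpr hc)
  obtain ⟨z, hz⟩ := IsAlgClosed.exists_pow_nat_eq (-(M.det / N.det)) two_pos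
  refine ⟨z, ?_, ?_, ?_⟩
  · rw [← pow_left_inj₀ (norm_nonneg z) zero_le_one two_ne_zero, ← norm_pow, hz, norm_neg,
      norm_div, hnorm, div_self (norm_ne_zero_iff.mpr hN0), one_pow]
  · rw [hdet, hz]; field_simp; ring
  · rw [sub_eq_add_neg, ← neg_smul, hdet, neg_sq, hz]; field_simp; ring

def coeffMatrix (χ : Fin 2 × Fin 2 → ℂ) : Matrix (Fin 2) (Fin 2) ℂ :=
  Matrix.of fun i j => χ (i, j)

theorem ptr2_proj4 (χ : Fin 2 × Fin 2 → ℂ) :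
    ptr2 (proj4 χ) = coeffMatrix χ * (coeffMatrix χ)ᴴ := by
  ext i k
  simp [ptr2, proj4, coeffMatrix, mul_apply]

theorem ptr1_proj4 (χ : Fin 2 × Fin 2 → ℂ) :
    ptr1 (proj4 χ) = ((coeffMatrix χ)ᴴ * coeffMatrix χ)ᵀ := by
  ext j l
  simp [ptr1, proj4, coeffMatrix, mul_apply, mul_comm]

theorem inner4_eq_trace (χ₁ χ₂ : Fin 2 × Fin 2 → ℂ) :
    inner4 χ₁ χ₂ = ((coeffMatrix χ₁)ᴴ * coeffMatrix χ₂).trace := by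
  simp only [inner4, trace, diag_apply, mul_apply, conjTranspose_apply, coeffMatrix, of_apply,
    Fintype.sum_prod_type]
  exact Finset.sum_comm

theorem inner4_self_of_unitVec {χ : Fin 2 × Fin 2 → ℂ} (h : UnitVec χ) : inner4 χ χ = 1 := by
  simpa [inner4, UnitVec, mul_comm] using h

theorem trace_proj4_of_unitVec {χ : Fin 2 × Fin 2 → ℂ} (h : UnitVec χ) : (proj4 χ).trace = 1 :=
  h

theorem proj4_smul (c : ℂ) (χ : Fin 2 × Fin 2 → ℂ) :
    proj4 (c • χ) = ((‖c‖ ^ 2 : ℝ) : ℂ) • proj4 χ := by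
  ext p q
  simp only [proj4, of_apply, Matrix.smul_apply, Pi.smul_apply, smul_eq_mul, star_mul',
    RCLike.star_def]
  push_cast
  rw [← Complex.mul_conj']
  ring

theorem proj4_tens (a b : Fin 2 → ℂ) : proj4 (tens a b) = proj2 a ⊗ₖ proj2 b := by
  ext ⟨i, j⟩ ⟨k, l⟩
  simp only [proj4, proj2, tens, kroneckerMap_apply, of_apply, star_mul']
  ring

theorem isDensity2_proj2 {a : Fin 2 → ℂ} (ha : UnitVec a) : IsDensity2 (proj2 a) :=
  ⟨posSemidef_vecMulVec_self_star a, ha⟩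

theorem exists_unitVec_smul_eq {α : Type*} [Fintype α] [DecidableEq α] [Nonempty α]
    (x : α → ℂ) : ∃ (c : ℂ) (a : α → ℂ), UnitVec a ∧ x = c • a := by
  set r := ‖(WithLp.toLp 2 x : EuclideanSpace ℂ α)‖ with hr
  have hsum : ∑ i, x i * star (x i) = (r : ℂ) ^ 2 := by
    rw [← Complex.ofReal_pow, hr, EuclideanSpace.norm_sq_eq]
    simp [Complex.mul_conj']
  by_cases hr0 : r = 0
  · refine ⟨0, Pi.single (Classical.arbitrary α) 1, by simp [UnitVec, Pi.single_apply], ?_⟩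
    rw [hr, norm_eq_zero] at hr0
    simpa using congrArg WithLp.ofLp hr0
  · have hr0' : (r : ℂ) ≠ 0 := by exact_mod_cast hr0
    refine ⟨r, (r⁻¹ : ℂ) • x, ?_, by rw [smul_smul, mul_inv_cancel₀ hr0', one_smul]⟩
    calc ∑ i, ((r⁻¹ : ℂ) • x) i * star (((r⁻¹ : ℂ) • x) i)
        = (r : ℂ)⁻¹ ^ 2 * ∑ i, x i * star (x i) := by
          simp only [Pi.smul_apply, smul_eq_mul, star_mul', star_inv₀, Complex.star_def,
            Complex.conj_ofReal, Finset.mul_sum]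
          exact Finset.sum_congr rfl fun i _ => by ring
      _ = 1 := by rw [hsum]; field_simp

theorem exists_eq_tens_of_det_coeffMatrix_eq_zero {u : Fin 2 × Fin 2 → ℂ}
    (h : (coeffMatrix u).det = 0) : ∃ a b : Fin 2 → ℂ, u = tens a b := by
  have minor : ∀ i j k l, u (i, j) * u (k, l) = u (i, l) * u (k, j) := by
    simp only [det_fin_two, coeffMatrix, of_apply] at h
    intro i j k l
    fin_cases i <;> fin_cases j <;> fin_cases k <;> fin_cases l <;>
      simp only [Fin.zero_eta, Fin.mk_one, Fin.isValue] <;>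
      first | ring1 | linear_combination h | linear_combination -h
  by_cases hu : u = 0
  · exact ⟨0, 0, by ext p; simp [hu, tens]⟩
  obtain ⟨⟨k, l⟩, hkl⟩ := Function.ne_iff.mp hu
  refine ⟨fun i => u (i, l), fun j => u (k, j) / u (k, l), ?_⟩
  ext ⟨i, j⟩
  rw [tens, mul_div_assoc', eq_div_iff hkl, minor]

theorem exists_proj4_eq_smul_kronecker {u : Fin 2 × Fin 2 → ℂ}
    (h : (coeffMatrix u).det = 0) : ∃ (w : ℝ) (a b : Fin 2 → ℂ), 0 ≤ w ∧ UnitVec a ∧ UnitVec b ∧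
      proj4 u = (w : ℂ) • (proj2 a ⊗ₖ proj2 b) := by
  obtain ⟨x, y, rfl⟩ := exists_eq_tens_of_det_coeffMatrix_eq_zero h
  obtain ⟨c, a, ha, rfl⟩ := exists_unitVec_smul_eq x
  obtain ⟨d, b, hb, rfl⟩ := exists_unitVec_smul_eq y
  have htens : tens (c • a) (d • b) = (c * d) • tens a b := by
    ext p
    simp only [tens, Pi.smul_apply, smul_eq_mul]
    ring
  exact ⟨‖c * d‖ ^ 2, a, b, by positivity, ha, hb, by rw [htens, proj4_smul, proj4_tens]⟩

theorem separable4_sum_proj4 {n : ℕ} (u : Fin n → Fin 2 × Fin 2 → ℂ)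
    (hu : ∀ i, (coeffMatrix (u i)).det = 0) (htr : (∑ i, proj4 (u i)).trace = 1) :
    Separable4 (∑ i, proj4 (u i)) := by
  choose w a b hw ha hb hproj using fun i => exists_proj4_eq_smul_kronecker (hu i)
  refine ⟨n, w, fun i => proj2 (a i), fun i => proj2 (b i), hw, ?_,
    fun i => isDensity2_proj2 (ha i), fun i => isDensity2_proj2 (hb i),
    Finset.sum_congr rfl fun i _ => hproj i⟩
  have hsum : ∑ i, (w i : ℂ) = 1 := by
    rw [← htr, trace_sum]
    refine Finset.sum_congr rfl fun i _ => ?_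
    rw [hproj i, trace_smul, trace_kronecker, (isDensity2_proj2 (ha i)).2,
      (isDensity2_proj2 (hb i)).2, mul_one, smul_eq_mul, mul_one]
  exact_mod_cast hsum

theorem mix_half_eq_proj4_add_proj4 (χ₁ χ₂ : Fin 2 × Fin 2 → ℂ) {z : ℂ} (hz : ‖z‖ = 1) :
    mix χ₁ χ₂ (1 / 2) =
      proj4 ((1 / 2 : ℂ) • (χ₁ + z • χ₂)) + proj4 ((1 / 2 : ℂ) • (χ₁ - z • χ₂)) := by
  have hzz : z * (starRingEnd ℂ) z = 1 := by rw [Complex.mul_conj', hz]; simp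
  ext p q
  simp only [mix, proj4, one_div, Complex.ofReal_inv, Complex.ofReal_ofNat, RCLike.star_def,
    smul_of, Matrix.add_apply, of_apply, Pi.smul_apply, smul_eq_mul, Pi.add_apply, Pi.sub_apply,
    star_mul', star_inv₀, star_ofNat, star_add, star_sub]
  linear_combination (-(1 : ℂ) / 2) * χ₂ p * (starRingEnd ℂ) (χ₂ q) * hzz

theorem trace_mix {χ₁ χ₂ : Fin 2 × Fin 2 → ℂ} (h₁ : UnitVec χ₁) (h₂ : UnitVec χ₂) (p : ℝ) :
    (mix χ₁ χ₂ p).trace = 1 := by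
  rw [mix, trace_add, trace_smul, trace_smul, trace_proj4_of_unitVec h₁,
    trace_proj4_of_unitVec h₂]
  simp

theorem separable4_mix_half {χ₁ χ₂ : Fin 2 × Fin 2 → ℂ} (h₁ : UnitVec χ₁) (h₂ : UnitVec χ₂)
    {z : ℂ} (hz : ‖z‖ = 1) (hplus : (coeffMatrix χ₁ + z • coeffMatrix χ₂).det = 0)
    (hminus : (coeffMatrix χ₁ - z • coeffMatrix χ₂).det = 0) :
    Separable4 (mix χ₁ χ₂ (1 / 2)) := by
  have hproduct : ∀ i, (coeffMatrix
      (![(1 / 2 : ℂ) • (χ₁ + z • χ₂), (1 / 2 : ℂ) • (χ₁ - z • χ₂)] i)).det = 0 := by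
    refine Fin.forall_fin_two.2 ⟨?_, ?_⟩
    · change ((1 / 2 : ℂ) • (coeffMatrix χ₁ + z • coeffMatrix χ₂)).det = 0
      rw [det_smul, hplus, mul_zero]
    · change ((1 / 2 : ℂ) • (coeffMatrix χ₁ - z • coeffMatrix χ₂)).det = 0
      rw [det_smul, hminus, mul_zero]
  have hsum : ∑ i, proj4 (![(1 / 2 : ℂ) • (χ₁ + z • χ₂), (1 / 2 : ℂ) • (χ₁ - z • χ₂)] i) =
      mix χ₁ χ₂ (1 / 2) := by
    rw [Fin.sum_univ_two, cons_val_zero, cons_val_one, cons_val_zero,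
      mix_half_eq_proj4_add_proj4 χ₁ χ₂ hz]
  rw [← hsum]
  exact separable4_sum_proj4 _ hproduct (hsum ▸ trace_mix h₁ h₂ _)

/-- the equal masked mixture (p = 1/2) of two orthogonal masked pure
states is separable. -/
theorem equal_masked_mixture_of_orthogonal_states_separable
    (χ₁ χ₂ : Fin 2 × Fin 2 → ℂ)
    (h₁ : UnitVec χ₁) (h₂ : UnitVec χ₂)
    (horth : inner4 χ₁ χ₂ = 0)
    (hmask1 : ptr1 (proj4 χ₁) = ptr1 (proj4 χ₂))
    (hmask2 : ptr2 (proj4 χ₁) = ptr2 (proj4 χ₂)) :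
    Separable4 (mix χ₁ χ₂ (1/2)) := by
  set M := coeffMatrix χ₁
  set N := coeffMatrix χ₂
  have hP : M * Mᴴ = N * Nᴴ := by rw [← ptr2_proj4, ← ptr2_proj4, hmask2]
  have hQ : Mᴴ * M = Nᴴ * N := by rw [← transpose_inj, ← ptr1_proj4, ← ptr1_proj4, hmask1]
  have hC : (Mᴴ * N).trace = 0 := by rw [← inner4_eq_trace, horth]
  have hM : Mᴴ * M = (1 / 2 : ℂ) • 1 := conjTranspose_mul_self_eq_half_smul_one hP hQ hC
    (by rw [← inner4_eq_trace, inner4_self_of_unitVec h₁])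
  obtain ⟨z, hz, hplus, hminus⟩ :=
    exists_norm_eq_one_det_add_smul_eq_zero (by norm_num) hM (hQ ▸ hM) hC
  exact separable4_mix_half h₁ h₂ hz hplus hminus

end
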